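/- Universal copy constructor: let G be a finite connected directed graph in which every edge is bidirectional, let X₀ be a vertex of G, and let G₀ = s_{X₀}(G) be the result of applying the splitFork action at X₀. For t ≥ 1 let G_t be obtained from G_{t−1} by applying the splitFork action s_X simultaneously at every vertex X of G_{t−1} that carries a fork. Then every G_t is well defined (the simultaneous applications at distinct vertices are compatible), the sequence (G_t) is eventually constant, and the eventual graph is the disjoint union of two connected directed graphs, each of which is isomorphic to G as a directed graph. -/

import Mathlib

namespace SplitFork

/-- A state: a directed graph, given by a type of vertices together with an edge
relation (edge set `E ⊆ V × V`, loops allowed). -/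
structure DiGraph : Type (u + 1) where
  V : Type u
  E : V → V → Prop

/-- A fork at a vertex `X`: a pair consisting of a unidirectional edge with target `X`
and a unidirectional edge with source `X`. -/
def DiGraph.HasFork (G : DiGraph) (X : G.V) : Prop :=
  (∃ y, G.E y X ∧ ¬G.E X y) ∧ (∃ y, G.E X y ∧ ¬G.E y X)

/-- An isomorphism of directed graphs: a bijection of the vertices preserving and
reflecting the edge relation. -/
structure Iso (G H : DiGraph) where
  toEquiv : G.V ≃ H.V
  edge_iff : ∀ a b : G.V, G.E a b ↔ H.E (toEquiv a) (toEquiv b)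

/-- The disjoint union of two directed graphs (no edges between the two parts). -/
def disjUnion (G H : DiGraph) : DiGraph where
  V := G.V ⊕ H.V
  E := fun u v =>
    (∃ a b, G.E a b ∧ u = Sum.inl a ∧ v = Sum.inl b) ∨
    (∃ a b, H.E a b ∧ u = Sum.inr a ∧ v = Sum.inr b)

open Classical in
/-- The new source of a non-loop edge `(a, b)` under the splitFork action at `X`
(the fresh copy `X′` is `Sum.inr ⟨⟩`): a unidirectional edge with source `X` gets the
copy `X′` as its source; all other edges retain their source. -/
noncomputable def newSrc (G : DiGraph.{u}) (X a b : G.V) : G.V ⊕ PUnit.{u + 1} :=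
  if a = X ∧ ¬G.E b a then Sum.inr ⟨⟩ else Sum.inl a

open Classical in
/-- The new target of a non-loop edge `(a, b)` under the splitFork action at `X`:
a bidirectional edge with target `X` gets the copy `X′` as its target; all other
edges retain their target. -/
noncomputable def newTgt (G : DiGraph.{u}) (X a b : G.V) : G.V ⊕ PUnit.{u + 1} :=
  if b = X ∧ G.E b a then Sum.inr ⟨⟩ else Sum.inl b

/-- The splitFork action `s_X` at the vertex `X`: (1) a fresh copy `X′` of `X` is
added; (2) each non-loop edge is redistributed: a bidirectional edge with target `X`
gets `X′` as its target, a unidirectional edge with target `X` keeps `X`, a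
bidirectional edge with source `X` keeps `X`, a unidirectional edge with source `X`
gets `X′` as its source; loops at `X` are retained and copied at `X′`, all other
edges are unchanged; (3) the adjoint of each formerly unidirectional edge incident to
`X` is added as an edge. -/
noncomputable def splitOne (G : DiGraph.{u}) (X : G.V) : DiGraph.{u} where
  V := G.V ⊕ PUnit.{u + 1}
  E := fun u v =>
    ∃ a b, G.E a b ∧
      ((a ≠ b ∧
          ((u = newSrc G X a b ∧ v = newTgt G X a b) ∨
            (¬G.E b a ∧ (a = X ∨ b = X) ∧ u = newTgt G X a b ∧ v = newSrc G X a b))) ∨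
        (a = b ∧
          ((u = Sum.inl a ∧ v = Sum.inl a) ∨
            (a = X ∧ u = Sum.inr ⟨⟩ ∧ v = Sum.inr ⟨⟩))))

/-- Sequential application of the splitFork action at a list of (original) vertices. -/
noncomputable def seqSplit : (G : DiGraph.{u}) → List G.V → DiGraph.{u}
  | G, [] => G
  | G, x :: xs => seqSplit (splitOne G x) (xs.map Sum.inl)
  termination_by G l => l.length
  decreasing_by simp [List.length_map]; exact (List.length_map ..).le

/-- `H` is obtained from `G` by applying the splitFork action (in some order)
at every vertex of `G` that carries a fork. -/
def Step (G H : DiGraph.{u}) : Prop :=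
  ∃ l : List G.V, l.Nodup ∧ (∀ x : G.V, x ∈ l ↔ G.HasFork x) ∧ H = seqSplit G l

/-!
Every state reached from `splitOne G X₀` is isomorphic to a *partial copy* of `G` over a set `S`
of already replicated vertices: `G` together with a copy of `S`, in which the edges from `S` to
its complement and from the complement into the copy are unidirectional. Since `G` is
bidirectional, the forks of this state are exactly the vertices of the outer boundary of `S`, and
splitting at any vertex `z ∉ S` yields the partial copy over `insert z S`. Hence one round of
simultaneous splits, in whatever order, replaces `S` by `S` together with its boundary. Starting
from `S = {X₀}`, connectivity makes `S` grow strictly until it is all of `V`, which takes at most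
`|V|` rounds, and the partial copy over `V` is two disjoint copies of `G`.
-/

universe u

theorem _root_.List.exists_eq_map_inl {α β : Type*} {l : List (α ⊕ β)}
    (h : ∀ v ∈ l, ∃ a, v = .inl a) : ∃ l' : List α, l = l'.map .inl := by
  induction l with
  | nil => exact ⟨[], rfl⟩
  | cons v vs ih =>
    obtain ⟨a, rfl⟩ := h v List.mem_cons_self
    obtain ⟨l', rfl⟩ := ih fun w hw => h w (List.mem_cons_of_mem _ hw)
    exact ⟨a :: l', rfl⟩

variable {G G₁ G₂ G₃ H₁ : DiGraph.{u}} {X z : G.V} {S : Set G.V}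

namespace Iso

def refl (G : DiGraph) : Iso G G := ⟨Equiv.refl _, fun _ _ => Iff.rfl⟩

def symm (i : Iso G₁ G₂) : Iso G₂ G₁ :=
  ⟨i.toEquiv.symm, fun a b => by simp only [i.edge_iff, Equiv.apply_symm_apply]⟩

def trans (i : Iso G₁ G₂) (j : Iso G₂ G₃) : Iso G₁ G₃ :=
  ⟨i.toEquiv.trans j.toEquiv, fun a b => (i.edge_iff a b).trans (j.edge_iff _ _)⟩

theorem hasFork_iff (i : Iso G₁ G₂) (x : G₁.V) :
    G₁.HasFork x ↔ G₂.HasFork (i.toEquiv x) := by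
  simp only [DiGraph.HasFork, i.toEquiv.exists_congr_left, i.edge_iff, Equiv.apply_symm_apply]

end Iso

theorem splitOne_E_inl_inl {p q : G.V} :
    (splitOne G X).E (.inl p) (.inl q) ↔
      p = X ∧ G.E q p ∨ p ≠ X ∧ G.E p q ∧ (q = X → ¬G.E q p) := by
  simp only [splitOne, newSrc, newTgt]
  constructor
  · rintro ⟨a, b, hab, h⟩
    split_ifs at h <;> grind
  · intro h
    by_cases hqp : q = p
    · subst hqp
      exact ⟨q, q, by grind, by simp⟩
    by_cases h' : G.E p q
    · exact ⟨p, q, h', by grind⟩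
    · exact ⟨q, p, by grind, by grind⟩

theorem splitOne_E_inl_inr {p : G.V} :
    (splitOne G X).E (.inl p) (.inr ⟨⟩) ↔ p ≠ X ∧ G.E X p := by
  simp only [splitOne, newSrc, newTgt]
  constructor
  · rintro ⟨a, b, hab, h⟩
    split_ifs at h <;> grind
  · rintro ⟨hp, h⟩
    by_cases h' : G.E p X
    · exact ⟨p, X, h', by grind⟩
    · exact ⟨X, p, h, by grind⟩

theorem splitOne_E_inr_inl {q : G.V} :
    (splitOne G X).E (.inr ⟨⟩) (.inl q) ↔ G.E X q ∧ ¬G.E q X := by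
  simp only [splitOne, newSrc, newTgt]
  constructor
  · rintro ⟨a, b, hab, h⟩
    split_ifs at h <;> grind
  · rintro ⟨h, h'⟩
    exact ⟨X, q, h, by grind⟩

theorem splitOne_E_inr_inr : (splitOne G X).E (.inr ⟨⟩) (.inr ⟨⟩) ↔ G.E X X := by
  simp only [splitOne, newSrc, newTgt]
  constructor
  · rintro ⟨a, b, hab, h⟩
    split_ifs at h <;> grind
  · intro h
    exact ⟨X, X, h, by simp⟩

def Iso.splitOneCongr (i : Iso G₁ G₂) (X : G₁.V) :
    Iso (splitOne G₁ X) (splitOne G₂ (i.toEquiv X)) where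
  toEquiv := Equiv.sumCongr i.toEquiv (Equiv.refl _)
  -- `simp` does not see through `(splitOne G X).V`; the `show` exposes the underlying `Sum.map`.
  edge_iff := show ∀ u v,
      _ ↔ (splitOne G₂ _).E (Sum.map i.toEquiv id u) (Sum.map i.toEquiv id v) by
    rintro (p | ⟨⟨⟩⟩) (q | ⟨⟨⟩⟩) <;>
      simp only [Sum.map_inl, Sum.map_inr, id, splitOne_E_inl_inl, splitOne_E_inl_inr,
        splitOne_E_inr_inl, splitOne_E_inr_inr, i.edge_iff, ne_eq, EmbeddingLike.apply_eq_iff_eq]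

theorem seqSplit_cons (G : DiGraph.{u}) (x : G.V) (xs : List G.V) :
    seqSplit G (x :: xs) = seqSplit (splitOne G x) (xs.map .inl) := by
  rw [seqSplit]

theorem Iso.nonempty_seqSplit (i : Iso G₁ G₂) (l : List G₁.V) :
    Nonempty (Iso (seqSplit G₁ l) (seqSplit G₂ (l.map i.toEquiv))) := by
  induction G₁, l using seqSplit.induct generalizing G₂ with
  | case1 G₁ => rw [seqSplit, List.map_nil, seqSplit]; exact ⟨i⟩
  | case2 G₁ x xs ih =>
    rw [List.map_cons, seqSplit_cons, seqSplit_cons]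
    convert ih (i.splitOneCongr x) using 3
    exact (List.map_map ..).trans
      (List.map_map (g := (i.splitOneCongr x).toEquiv) (f := .inl) ..).symm

theorem Step.exists_iso_step (i : Iso G₁ G₂) (h : Step G₁ H₁) :
    ∃ H₂, Step G₂ H₂ ∧ Nonempty (Iso H₁ H₂) := by
  obtain ⟨l, hnd, hmem, rfl⟩ := h
  refine ⟨_, ⟨l.map i.toEquiv, hnd.map i.toEquiv.injective, fun y => ?_, rfl⟩,
    i.nonempty_seqSplit l⟩
  rw [← i.toEquiv.apply_symm_apply y, List.mem_map_of_injective i.toEquiv.injective, hmem,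
    i.hasFork_iff]

theorem finite_seqSplit (l : List G.V) (hG : Finite G.V) : Finite (seqSplit G l).V := by
  induction G, l using seqSplit.induct with
  | case1 G => rwa [seqSplit]
  | case2 G x xs ih =>
    rw [seqSplit_cons]
    exact ih (inferInstanceAs (Finite (G.V ⊕ PUnit)))

theorem Step.finite {H : DiGraph.{u}} (h : Step G H) (hG : Finite G.V) : Finite H.V := by
  obtain ⟨l, -, -, rfl⟩ := h
  exact finite_seqSplit l hG

theorem exists_step (hG : Finite G.V) : ∃ H, Step G H := by
  let forks := (Set.toFinite {x | G.HasFork x}).toFinset.toList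
  exact ⟨_, forks, Finset.nodup_toList _, fun x => by simp [forks], rfl⟩

theorem exists_step_sequence (G₀ : DiGraph.{u}) (hG₀ : Finite G₀.V) :
    ∃ Gs : ℕ → DiGraph.{u}, Gs 0 = G₀ ∧ ∀ t, Step (Gs t) (Gs (t + 1)) := by
  have step (H : {H : DiGraph.{u} // Finite H.V}) :
      ∃ H' : {H : DiGraph.{u} // Finite H.V}, Step H.1 H'.1 :=
    have ⟨H', hH'⟩ := exists_step H.2
    ⟨⟨H', hH'.finite H.2⟩, hH'⟩
  choose next hnext using step
  exact ⟨fun t => (next^[t] ⟨G₀, hG₀⟩).1, rfl,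
    fun t => by simpa only [Function.iterate_succ_apply'] using hnext _⟩

/-- `inl a` is the vertex `a` of `G` and `inr s` the copy of `s ∈ S`. -/
abbrev partialCopy (G : DiGraph.{u}) (S : Set G.V) : DiGraph.{u} where
  V := G.V ⊕ S
  E
    | .inl a, .inl b => G.E a b ∧ (b ∈ S → a ∈ S)
    | .inl a, .inr s => G.E a s ∧ a ∉ S
    | .inr _, .inl _ => False
    | .inr s, .inr t => G.E s t

def boundary (G : DiGraph.{u}) (S : Set G.V) : Set G.V := {w | w ∉ S ∧ ∃ s ∈ S, G.E s w}

def expand (G : DiGraph.{u}) (S : Set G.V) : Set G.V := S ∪ boundary G S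

theorem partialCopy_hasFork_iff (hbi : ∀ a b, G.E a b → G.E b a) {v : (partialCopy G S).V} :
    (partialCopy G S).HasFork v ↔ ∃ w ∈ boundary G S, v = .inl w := by
  rcases v with a | ⟨s, hs⟩ <;>
    simp only [DiGraph.HasFork, Sum.exists, boundary, Set.mem_ofPred_eq, Sum.inl.injEq,
      reduceCtorEq, Subtype.exists] <;> grind

def Iso.partialCopyEmpty (G : DiGraph.{u}) : Iso G (partialCopy G ∅) where
  toEquiv := (Equiv.sumEmpty G.V (∅ : Set G.V)).symm
  edge_iff a b := by simp [Equiv.sumEmpty]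

def Iso.partialCopyUniv (G : DiGraph.{u}) : Iso (partialCopy G .univ) (disjUnion G G) where
  toEquiv := Equiv.sumCongr (Equiv.refl G.V) (Equiv.Set.univ G.V)
  edge_iff := show ∀ u v : G.V ⊕ (.univ : Set G.V),
      _ ↔ (disjUnion G G).E (u.map id (↑)) (v.map id (↑)) by
    rintro (a | ⟨a, -⟩) (b | ⟨b, -⟩) <;> simp [disjUnion]

noncomputable def insertEquiv (hz : z ∉ S) :
    (G.V ⊕ S) ⊕ PUnit.{u + 1} ≃ G.V ⊕ (insert z S : Set G.V) :=
  letI := Classical.decPred (· ∈ S)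
  (Equiv.sumAssoc _ _ _).trans (Equiv.sumCongr (.refl _) (Equiv.Set.insert hz).symm)

@[simp] theorem insertEquiv_inl_inl (hz : z ∉ S) (a : G.V) :
    insertEquiv hz (.inl (.inl a)) = .inl a :=
  rfl

@[simp] theorem insertEquiv_inl_inr (hz : z ∉ S) (s : S) :
    insertEquiv hz (.inl (.inr s)) = .inr ⟨s, .inr s.2⟩ :=
  rfl

@[simp] theorem insertEquiv_inr (hz : z ∉ S) :
    insertEquiv hz (.inr ⟨⟩) = .inr ⟨z, .inl rfl⟩ :=
  rfl

noncomputable def Iso.splitOnePartialCopy (hbi : ∀ a b, G.E a b → G.E b a) (hz : z ∉ S) :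
    Iso (splitOne (partialCopy G S) (.inl z)) (partialCopy G (insert z S)) where
  toEquiv := insertEquiv hz
  edge_iff := show ∀ u v,
      _ ↔ (partialCopy G (insert z S)).E (insertEquiv hz u) (insertEquiv hz v) by
    rintro ((p | ⟨s, hs⟩) | ⟨⟨⟩⟩) ((q | ⟨t, ht⟩) | ⟨⟨⟩⟩) <;>
      simp only [splitOne_E_inl_inl (G := partialCopy G S),
        splitOne_E_inl_inr (G := partialCopy G S), splitOne_E_inr_inl (G := partialCopy G S),
        splitOne_E_inr_inr (G := partialCopy G S), insertEquiv_inl_inl, insertEquiv_inl_inr,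
        insertEquiv_inr, Set.mem_insert_iff, Sum.inl.injEq, reduceCtorEq, ne_eq] <;> grind

theorem nonempty_iso_seqSplit_partialCopy (hbi : ∀ a b, G.E a b → G.E b a) {l : List G.V}
    (hl : l.Nodup) (hS : ∀ w ∈ l, w ∉ S) :
    Nonempty (Iso (seqSplit (partialCopy G S) (l.map .inl))
      (partialCopy G (S ∪ {w | w ∈ l}))) := by
  induction l generalizing S with
  | nil =>
    rw [List.map_nil, seqSplit]
    simpa using ⟨Iso.refl _⟩
  | cons z zs ih =>
    rw [List.nodup_cons] at hl
    have hz : z ∉ S := hS z List.mem_cons_self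
    obtain ⟨i⟩ := (Iso.splitOnePartialCopy hbi hz).nonempty_seqSplit ((zs.map .inl).map .inl)
    obtain ⟨j⟩ := ih hl.2 (S := insert z S) fun w hw hwS =>
      (Set.mem_insert_iff.1 hwS).elim (fun h => hl.1 (h ▸ hw)) (hS w (List.mem_cons_of_mem _ hw))
    have hmap : ((zs.map .inl).map .inl).map (Iso.splitOnePartialCopy hbi hz).toEquiv =
        zs.map (Sum.inl : G.V → (partialCopy G (insert z S)).V) := by
      erw [List.map_map, List.map_map]
      rfl
    have hset : insert z S ∪ {w | w ∈ zs} = S ∪ {w | w ∈ z :: zs} := by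
      ext; simp only [Set.mem_union, Set.mem_insert_iff, Set.mem_ofPred_eq, List.mem_cons]; tauto
    rw [hmap] at i
    rw [List.map_cons, seqSplit_cons, ← hset]
    exact ⟨i.trans j⟩

theorem Step.nonempty_iso_partialCopy_expand (hbi : ∀ a b, G.E a b → G.E b a) {H : DiGraph.{u}}
    (h : Step (partialCopy G S) H) : Nonempty (Iso H (partialCopy G (expand G S))) := by
  obtain ⟨l, hnd, hmem, rfl⟩ := h
  have hforks (v) (hv : v ∈ l) : ∃ w ∈ boundary G S, v = .inl w :=
    (partialCopy_hasFork_iff hbi).1 ((hmem v).1 hv)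
  obtain ⟨l, rfl⟩ := List.exists_eq_map_inl fun v hv => (hforks v hv).imp fun _ => And.right
  have hmem' (w : G.V) : w ∈ l ↔ w ∈ boundary G S := by
    simpa [List.mem_map_of_injective Sum.inl_injective, partialCopy_hasFork_iff hbi]
      using hmem (.inl w)
  have := nonempty_iso_seqSplit_partialCopy hbi (hnd.of_map _) fun w hw => ((hmem' w).1 hw).1
  convert this using 4
  ext w
  simp [expand, hmem']

theorem Step.nonempty_iso_partialCopy_expand_of_iso (hbi : ∀ a b, G.E a b → G.E b a)
    {G' H : DiGraph.{u}} (i : Iso G' (partialCopy G S)) (h : Step G' H) :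
    Nonempty (Iso H (partialCopy G (expand G S))) := by
  obtain ⟨H', hH', ⟨j⟩⟩ := h.exists_iso_step i
  obtain ⟨k⟩ := hH'.nonempty_iso_partialCopy_expand hbi
  exact ⟨j.trans k⟩

theorem nonempty_iso_partialCopy_iterate_expand (hbi : ∀ a b, G.E a b → G.E b a) (X₀ : G.V)
    {Gs : ℕ → DiGraph.{u}} (h0 : Gs 0 = splitOne G X₀)
    (hstep : ∀ t, Step (Gs t) (Gs (t + 1))) (t : ℕ) :
    Nonempty (Iso (Gs t) (partialCopy G ((expand G)^[t] {X₀}))) := by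
  induction t with
  | zero =>
    rw [h0, Function.iterate_zero_apply, Set.singleton_def]
    exact ⟨(Iso.splitOneCongr (Iso.partialCopyEmpty G) X₀).trans
      (Iso.splitOnePartialCopy hbi (Set.notMem_empty X₀))⟩
  | succ t ih =>
    obtain ⟨i⟩ := ih
    rw [Function.iterate_succ_apply']
    exact (hstep t).nonempty_iso_partialCopy_expand_of_iso hbi i

theorem expand_univ : expand G .univ = .univ :=
  Set.univ_union _

theorem boundary_nonempty (hconn : ∀ a b : G.V, Relation.ReflTransGen G.E a b)
    (hS : S.Nonempty) (hS' : S ≠ .univ) : (boundary G S).Nonempty := by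
  obtain ⟨x, hx⟩ := hS
  obtain ⟨b, hb⟩ := (Set.ne_univ_iff_exists_notMem S).1 hS'
  induction hconn x b with
  | refl => exact absurd hx hb
  | @tail c d _ hcd ih =>
    by_cases hc : c ∈ S
    · exact ⟨d, hb, c, hc, hcd⟩
    · exact ih hc

theorem iterate_expand_eq_univ_or_lt_ncard [Finite G.V]
    (hconn : ∀ a b : G.V, Relation.ReflTransGen G.E a b) (hS : S.Nonempty) (t : ℕ) :
    (expand G)^[t] S = .univ ∨ t < ((expand G)^[t] S).ncard := by
  induction t with
  | zero => exact .inr ((Set.ncard_pos).2 hS)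
  | succ t ih =>
    rw [Function.iterate_succ_apply']
    by_cases huniv : (expand G)^[t] S = .univ
    · exact .inl (by rw [huniv, expand_univ])
    have h := ih.resolve_left huniv
    right
    obtain ⟨w, hw⟩ := boundary_nonempty hconn (Set.nonempty_of_ncard_ne_zero (by omega)) huniv
    have : (expand G)^[t] S ⊂ expand G ((expand G)^[t] S) :=
      Set.ssubset_union_left_iff.2 fun hsub => hw.1 (hsub hw)
    have := Set.ncard_lt_ncard this
    omega

theorem iterate_expand_eq_univ [Finite G.V] (hconn : ∀ a b : G.V, Relation.ReflTransGen G.E a b)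
    (hS : S.Nonempty) {t : ℕ} (ht : Nat.card G.V ≤ t) :
    (expand G)^[t] S = .univ := by
  have hcard : (expand G)^[Nat.card G.V] S = .univ :=
    (iterate_expand_eq_univ_or_lt_ncard hconn hS _).resolve_right
      (Set.ncard_le_card _).not_gt
  rw [← Nat.sub_add_cancel ht, Function.iterate_add_apply, hcard]
  exact Function.iterate_fixed expand_univ _

/-- **Universal copy constructor.** Let `G` be a finite connected directed graph in
which every edge is bidirectional, and let `X₀` be a vertex of `G`. Form `G₀` by
applying the splitFork action at `X₀`, and for `t ≥ 1` obtain `G_t` from `G_{t-1}` by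
applying the splitFork action at every vertex carrying a fork. Then every `G_t` is
well defined — such a sequence exists and the applications of the splitFork action at
the distinct fork-carrying vertices are compatible (any two orders give isomorphic
results) — the sequence is eventually constant (up to isomorphism), and the eventual
graph is the disjoint union of two connected directed graphs, each of which is
isomorphic to `G`. -/
theorem universal_copy_constructor (G : DiGraph.{u}) [Fintype G.V]
    (hconn : ∀ a b : G.V, Relation.ReflTransGen G.E a b)
    (hbi : ∀ a b : G.V, G.E a b → G.E b a) (X₀ : G.V) :
    (∃ Gs : ℕ → DiGraph.{u}, Gs 0 = splitOne G X₀ ∧ ∀ t, Step (Gs t) (Gs (t + 1))) ∧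
    ∀ Gs : ℕ → DiGraph.{u}, Gs 0 = splitOne G X₀ → (∀ t, Step (Gs t) (Gs (t + 1))) →
      (∀ (t : ℕ) (H₁ H₂ : DiGraph.{u}), Step (Gs t) H₁ → Step (Gs t) H₂ →
        Nonempty (Iso H₁ H₂)) ∧
      ∃ T : ℕ, (∀ t, T ≤ t → Nonempty (Iso (Gs t) (Gs T))) ∧
        Nonempty (Iso (Gs T) (disjUnion G G)) := by
  refine ⟨exists_step_sequence _ (inferInstanceAs (Finite (G.V ⊕ PUnit))),
    fun Gs h0 hstep => ?_⟩
  have hiso := nonempty_iso_partialCopy_iterate_expand hbi X₀ h0 hstep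
  have hfinal (t) (ht : Nat.card G.V ≤ t) : Nonempty (Iso (Gs t) (partialCopy G .univ)) := by
    simpa only [iterate_expand_eq_univ hconn (Set.singleton_nonempty X₀) ht] using hiso t
  refine ⟨fun t H₁ H₂ h₁ h₂ => ?_, Nat.card G.V, fun t ht => ?_, ?_⟩
  · obtain ⟨i⟩ := hiso t
    obtain ⟨j₁⟩ := h₁.nonempty_iso_partialCopy_expand_of_iso hbi i
    obtain ⟨j₂⟩ := h₂.nonempty_iso_partialCopy_expand_of_iso hbi i
    exact ⟨j₁.trans j₂.symm⟩
  · obtain ⟨i⟩ := hfinal t ht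
    obtain ⟨j⟩ := hfinal _ le_rfl
    exact ⟨i.trans j.symm⟩
  · obtain ⟨i⟩ := hfinal _ le_rfl
    exact ⟨i.trans (Iso.partialCopyUniv G)⟩

end SplitFork
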